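/- arXiv:1102.1816 — 2 statements merged into one kernel-verified Lean document; each statement's English description precedes it below -/
import Mathlib

section
/- Let A be a finite alphabet with |A| ≥ 2, and for n ≥ 2 and 1 ≤ k ≤ n consider the function K̃ : A^n → ℝ given by K̃(s_0,…,s_{n−1}) = Ĥ_k(s_0^{n−1}), the k-block empirical entropy. Then for every j ∈ {0,…,n−1}, the oscillation of K̃ at the j-th coordinate satisfies δ_j(K̃) ≤ 2k|A|^k (log n)/n. -/
open MeasureTheory Finset
open scoped ENNReal

namespace GibbsEntropy

variable {A : Type*} [Fintype A] [DecidableEq A]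

/-- The left shift `σ` on one-sided sequences `Ω = A^ℕ`. -/
def shift (x : ℕ → A) : ℕ → A := fun i => x (i + 1)

/-- The cylinder set `[w]` determined by a word `w = a_0 … a_{k-1}`. -/
def cylinder {k : ℕ} (w : Fin k → A) : Set (ℕ → A) := {x | ∀ i : Fin k, x i.val = w i}

/-- The metric `d_θ(x,y) = θ^N`, `N` the first disagreement index. -/
noncomputable def dTheta (θ : ℝ) (x y : ℕ → A) : ℝ :=
  letI : Decidable (x = y) := Classical.dec _
  if h : x = y then 0
  else θ ^ (Nat.find (p := fun n => x n ≠ y n)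
    (by by_contra hc; push_neg at hc; exact h (funext fun i => hc i)))

/-- `f` is Lipschitz w.r.t. `d_θ`, i.e. `var_m(f) ≤ C θ^m` for all `m`
(`var_m` being the oscillation over pairs agreeing on coordinates `0,…,m`). -/
def LipFun (θ : ℝ) (f : (ℕ → A) → ℝ) : Prop :=
  ∃ C : ℝ, 0 ≤ C ∧ ∀ (m : ℕ) (x y : ℕ → A), (∀ i ≤ m, x i = y i) → |f x - f y| ≤ C * θ ^ m

/-- `|f|_θ`, the least Lipschitz constant of `f` w.r.t. `d_θ`. -/
noncomputable def lipNorm (θ : ℝ) (f : (ℕ → A) → ℝ) : ℝ :=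
  sInf {C : ℝ | 0 ≤ C ∧ ∀ (m : ℕ) (x y : ℕ → A), (∀ i ≤ m, x i = y i) → |f x - f y| ≤ C * θ ^ m}

/-- A separately Lipschitz function of `n` variables in `Ω^n`. -/
def SepLip (θ : ℝ) {n : ℕ} (K : (Fin n → (ℕ → A)) → ℝ) : Prop :=
  ∀ j : Fin n, ∃ C : ℝ, 0 ≤ C ∧ ∀ (x : Fin n → (ℕ → A)) (y : ℕ → A),
    |K x - K (Function.update x j y)| ≤ C * dTheta θ (x j) y

/-- `Lip_j(K)`, the least Lipschitz constant of `K` in its `j`-th variable. -/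
noncomputable def lipCoord (θ : ℝ) {n : ℕ} (K : (Fin n → (ℕ → A)) → ℝ) (j : Fin n) : ℝ :=
  sInf {C : ℝ | 0 ≤ C ∧ ∀ (x : Fin n → (ℕ → A)) (y : ℕ → A),
    |K x - K (Function.update x j y)| ≤ C * dTheta θ (x j) y}

/-- The trajectory `(x, σx, …, σ^{n-1}x)`. -/
def traj (n : ℕ) (x : ℕ → A) : Fin n → (ℕ → A) := fun i => shift^[i.val] x

/-- The Gibbs property (with topological pressure `0`) of `μ` for the potential `φ`:
`C⁻¹ ≤ μ([x_0^{m-1}]) / exp(∑_{k<m} φ(σ^k x)) ≤ C`. -/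
def IsGibbs [MeasurableSpace A] (φ : (ℕ → A) → ℝ) (μ : Measure (ℕ → A)) : Prop :=
  ∃ C : ℝ, 1 < C ∧ ∀ (x : ℕ → A) (m : ℕ), 1 ≤ m →
    C⁻¹ * Real.exp (∑ i ∈ Finset.range m, φ (shift^[i] x)) ≤
        (μ (cylinder (fun i : Fin m => x i.val))).toReal ∧
    (μ (cylinder (fun i : Fin m => x i.val))).toReal ≤
        C * Real.exp (∑ i ∈ Finset.range m, φ (shift^[i] x))

/-- Empirical frequency `E_k(w; x_0^{n-1})` of the word `w` in the `n`-periodization of `x`. -/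
noncomputable def empFreq (n k : ℕ) (x : ℕ → A) (w : Fin k → A) : ℝ :=
  ((Finset.range n).filter (fun j => ∀ i : Fin k, x ((j + i.val) % n) = w i)).card / n

/-- `k`-block entropy `H_k(η)` of a probability vector `η` on `A^k` (`0 log 0 = 0`). -/
noncomputable def blockEnt (k : ℕ) (η : (Fin k → A) → ℝ) : ℝ :=
  -∑ w : Fin k → A, η w * Real.log (η w)

/-- The `k`-block empirical entropy `Ĥ_k(x_0^{n-1})`. -/
noncomputable def empEnt (n k : ℕ) (x : ℕ → A) : ℝ := blockEnt k (empFreq n k x)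

/-- The `k`-block conditional empirical entropy `ĥ_k = Ĥ_k - Ĥ_{k-1}`. -/
noncomputable def condEmpEnt (n k : ℕ) (x : ℕ → A) : ℝ := empEnt n k x - empEnt n (k - 1) x

/-- `k`-block relative entropy `H_k(η | ρ) = ∑ η log(η/ρ)` (conventions `0 log 0 = 0`,
`0 log (0/c) = 0`). -/
noncomputable def relEnt (k : ℕ) (η ρ : (Fin k → A) → ℝ) : ℝ :=
  ∑ w : Fin k → A, η w * Real.log (η w / ρ w)

/-- `μ([w])` as a real number. -/
noncomputable def muWord [MeasurableSpace A] (μ : Measure (ℕ → A)) (k : ℕ) (w : Fin k → A) : ℝ :=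
  (μ (cylinder w)).toReal

/-- `Δ̂_k(x_0^{n-1}) = -H_k(E_k(·;x_0^{n-1})|μ) + H_{k-1}(E_{k-1}(·;x_0^{n-1})|μ)`. -/
noncomputable def deltaHat [MeasurableSpace A] (μ : Measure (ℕ → A)) (n k : ℕ) (x : ℕ → A) : ℝ :=
  -relEnt k (empFreq n k x) (muWord μ k) +
    relEnt (k - 1) (empFreq n (k - 1) x) (muWord μ (k - 1))

/-- Hitting time `W_n(x,y) = inf{j ≥ 1 : y_j^{j+n-1} = x_0^{n-1}}` (in `ℝ≥0∞`, `= ∞`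
if there is no such `j`). -/
noncomputable def hitTime (n : ℕ) (x y : ℕ → A) : ℝ≥0∞ :=
  ⨅ (j : ℕ) (_ : 1 ≤ j ∧ ∀ i : Fin n, y (j + i.val) = x i.val), (j : ℝ≥0∞)

/-- Hitting time `τ_{[w]}(y) = inf{j ≥ 1 : y_j^{j+n-1} = w}` of the cylinder of a word `w`. -/
noncomputable def wordHitTime {n : ℕ} (w : Fin n → A) (y : ℕ → A) : ℝ≥0∞ :=
  ⨅ (j : ℕ) (_ : 1 ≤ j ∧ ∀ i : Fin n, y (j + i.val) = w i), (j : ℝ≥0∞)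

/-- The tail word `a_1^{k-1}` of a word `a_0^{k-1}`. -/
def wordTail {k : ℕ} (w : Fin k → A) : Fin (k - 1) → A := fun i => w ⟨i.val + 1, by omega⟩

end GibbsEntropy

/-! Changing one letter of `s_0^{n-1}` affects only the `k` cyclic windows that cover it, so
every word count moves by at most `k`. Between consecutive multiples of `1/n` in `[0, 1]` the
function `t ↦ -t log t` moves by at most `2 log n / n`, so each of the `|A|^k` terms of `Ĥ_k`
moves by at most `2 k log n / n`. -/

open Real

lemma Real.negMulLog_div (x y : ℝ) : negMulLog (x / y) = (negMulLog x + x * log y) / y := by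
  rw [div_eq_mul_inv, negMulLog_mul]
  simp only [negMulLog, log_inv]
  ring

lemma Real.mul_log_add_one_sub_log_mem_Icc {a : ℝ} (ha : 0 ≤ a) :
    a * (log (a + 1) - log a) ∈ Set.Icc 0 1 := by
  rcases ha.eq_or_lt with rfl | ha
  · simp
  refine ⟨mul_nonneg ha.le (sub_nonneg.2 (log_le_log ha (by linarith))), ?_⟩
  rw [← log_div (by linarith) ha.ne']
  calc a * log ((a + 1) / a) ≤ a * ((a + 1) / a - 1) :=
        mul_le_mul_of_nonneg_left (log_le_sub_one_of_pos (by positivity)) ha.le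
    _ = 1 := by field_simp; ring

lemma Real.one_le_two_mul_log_natCast {n : ℕ} (hn : 2 ≤ n) : 1 ≤ 2 * log n := by
  have h2 : log 2 ≤ log n := log_le_log (by norm_num) (by exact_mod_cast hn)
  linarith [log_two_gt_d9]

lemma Real.abs_negMulLog_div_succ_sub_le {n a : ℕ} (hn : 2 ≤ n) (ha : a + 1 ≤ n) :
    |negMulLog ((a + 1 : ℕ) / n) - negMulLog (a / n)| ≤ 2 * log n / n := by
  have hn0 : (0 : ℝ) < n := Nat.cast_pos.2 (by omega)
  rw [negMulLog_div, negMulLog_div, ← sub_div, abs_div, abs_of_pos hn0]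
  refine div_le_div_of_nonneg_right ?_ hn0.le
  have hcross : negMulLog ((a + 1 : ℕ) : ℝ) + ((a + 1 : ℕ) : ℝ) * log n - (negMulLog a + a * log n)
      = log n - log (a + 1) - a * (log (a + 1) - log a) := by
    simp only [negMulLog]; push_cast; ring
  obtain ⟨hlo, hhi⟩ := mul_log_add_one_sub_log_mem_Icc (Nat.cast_nonneg (α := ℝ) a)
  have hlog₀ : 0 ≤ log ((a : ℝ) + 1) := log_nonneg (le_add_of_nonneg_left a.cast_nonneg)
  have hlog : log ((a : ℝ) + 1) ≤ log n := log_le_log (by positivity) (by exact_mod_cast ha)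
  rw [hcross, abs_le]
  constructor <;> linarith [one_le_two_mul_log_natCast hn]

lemma Real.abs_negMulLog_div_sub_le {n a b k : ℕ} (hn : 2 ≤ n) (ha : a ≤ n) (hb : b ≤ n)
    (hab : a ≤ b + k) (hba : b ≤ a + k) :
    |negMulLog (a / n) - negMulLog (b / n)| ≤ k * (2 * log n / n) := by
  wlog h : a ≤ b generalizing a b
  · rw [abs_sub_comm]
    exact this hb ha hba hab (by omega)
  have hstep : 0 ≤ 2 * log n / n := by
    have := one_le_two_mul_log_natCast hn
    positivity
  have htel := dist_le_Ico_sum_of_dist_le (f := fun m : ℕ => negMulLog (m / n)) h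
    (d := fun _ => 2 * log n / n) fun {m} _ hm => by
      rw [dist_comm, Real.dist_eq]
      exact abs_negMulLog_div_succ_sub_le hn (by omega)
  rw [Real.dist_eq, sum_const, Nat.card_Ico, nsmul_eq_mul] at htel
  exact htel.trans (mul_le_mul_of_nonneg_right (by exact_mod_cast (by omega : b - a ≤ k)) hstep)

/-- `(n - 1) * i` stands for `-i` modulo `n`, avoiding truncated subtraction. -/
lemma Nat.eq_mod_of_add_mod_eq {n j j' i : ℕ} (hj' : j' < n) (h : (j' + i) % n = j) :
    j' = (j + (n - 1) * i) % n := by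
  obtain ⟨m, rfl⟩ : ∃ m, n = m + 1 := ⟨n - 1, by omega⟩
  rw [Nat.add_sub_cancel, ← h, Nat.mod_add_mod, show j' + i + m * i = j' + (m + 1) * i by ring,
    Nat.add_mul_mod_self_left, Nat.mod_eq_of_lt hj']

namespace GibbsEntropy

variable {A : Type*} [DecidableEq A]

def occurrences (n k : ℕ) (x : ℕ → A) (w : Fin k → A) : Finset ℕ :=
  (range n).filter fun j => ∀ i : Fin k, x ((j + i.val) % n) = w i

lemma card_occurrences_le (n k : ℕ) (x : ℕ → A) (w : Fin k → A) : #(occurrences n k x w) ≤ n :=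
  (card_filter_le _ _).trans (card_range n).le

lemma card_occurrences_le_add {n k j : ℕ} {x y : ℕ → A} (hxy : ∀ m < n, m ≠ j → x m = y m)
    (w : Fin k → A) : #(occurrences n k x w) ≤ #(occurrences n k y w) + k := by
  set covering := (range k).image fun i => (j + (n - 1) * i) % n
  have hsub : occurrences n k x w ⊆ occurrences n k y w ∪ covering := by
    intro j' hj'
    simp only [occurrences, mem_filter, mem_range] at hj'
    by_cases hcov : ∃ i : Fin k, (j' + i.val) % n = j
    · obtain ⟨i, hi⟩ := hcov
      exact mem_union_right _ <|
        mem_image.2 ⟨i, mem_range.2 i.isLt, (Nat.eq_mod_of_add_mod_eq hj'.1 hi).symm⟩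
    · refine mem_union_left _ (mem_filter.2 ⟨mem_range.2 hj'.1, fun i => ?_⟩)
      rw [← hxy _ (Nat.mod_lt _ (by omega)) fun h => hcov ⟨i, h⟩]
      exact hj'.2 i
  calc #(occurrences n k x w) ≤ #(occurrences n k y w ∪ covering) := card_le_card hsub
    _ ≤ #(occurrences n k y w) + #covering := card_union_le _ _
    _ ≤ #(occurrences n k y w) + k := by
      gcongr
      exact card_image_le.trans (card_range k).le

lemma empEnt_eq_sum_negMulLog [Fintype A] (n k : ℕ) (x : ℕ → A) :
    empEnt n k x = ∑ w : Fin k → A, negMulLog (empFreq n k x w) := by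
  simp [empEnt, blockEnt, negMulLog, sum_neg_distrib]

lemma abs_empEnt_sub_le [Fintype A] {n k j : ℕ} (hn : 2 ≤ n) {x y : ℕ → A}
    (hxy : ∀ m < n, m ≠ j → x m = y m) :
    |empEnt n k x - empEnt n k y| ≤ 2 * k * (Fintype.card A : ℝ) ^ k * log n / n := by
  have hword (w : Fin k → A) :
      |negMulLog (empFreq n k x w) - negMulLog (empFreq n k y w)| ≤ k * (2 * log n / n) :=
    abs_negMulLog_div_sub_le hn (card_occurrences_le n k x w) (card_occurrences_le n k y w)
      (card_occurrences_le_add hxy w)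
      (card_occurrences_le_add (fun m hm hmj => (hxy m hm hmj).symm) w)
  calc |empEnt n k x - empEnt n k y|
      = |∑ w : Fin k → A, (negMulLog (empFreq n k x w) - negMulLog (empFreq n k y w))| := by
        rw [empEnt_eq_sum_negMulLog, empEnt_eq_sum_negMulLog, sum_sub_distrib]
    _ ≤ ∑ _w : Fin k → A, (k : ℝ) * (2 * log n / n) :=
        (abs_sum_le_sum_abs _ _).trans (sum_le_sum fun w _ => hword w)
    _ = 2 * k * (Fintype.card A : ℝ) ^ k * log n / n := by
        rw [sum_const, card_univ, Fintype.card_fun, Fintype.card_fin, nsmul_eq_mul]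
        push_cast
        ring

end GibbsEntropy

open GibbsEntropy

theorem statement_8 {A : Type*} [Fintype A] [DecidableEq A]
    (n k : ℕ) (hn : 2 ≤ n) (j : Fin n) (s : Fin n → A) (b : A) :
    |empEnt n k (fun i => s ⟨i % n, Nat.mod_lt i (by omega)⟩) -
        empEnt n k (fun i => Function.update s j b ⟨i % n, Nat.mod_lt i (by omega)⟩)| ≤
      2 * k * (Fintype.card A : ℝ) ^ k * Real.log n / n := by
  refine abs_empEnt_sub_le (j := j.val) hn fun m hm hmj => ?_
  refine (Function.update_of_ne (fun h => hmj ?_) b s).symm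
  simpa [Nat.mod_eq_of_lt hm] using congrArg Fin.val h
end

section
/- Let μ_φ be the Gibbs measure of a Lipschitz potential φ with pressure 0. There exist constants C₁, C₂ > 0 and t₀ > 0 such that for every n ≥ 1 and every t > t₀, (μ_φ ⊗ μ_φ){(x,y) : (1/n) log W_n(x,y) > h(μ_φ) + t} ≤ C₁ e^{−C₂ n t²}. -/
open MeasureTheory Finset
open scoped ENNReal

open GibbsEntropy

/-!
If `W_n(x, y) > e^q`, the word `x_0^{n-1}` occurs in none of the `R = ⌊e^q / n⌋` disjoint blocks
`y_{in}^{(i+1)n-1}`, `1 ≤ i ≤ R`. The Gibbs inequalities make `μ` quasi-Bernoulli,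
`μ([u] ∩ σ^{-m}[w]) ≥ C⁻³ μ[u] μ[w]`, so, conditionally on the earlier blocks, each block misses
`w` with probability at most `1 - C⁻³ μ[w] ≤ 1 - C⁻⁴ e^{-nB}`, where `B` bounds `|φ|` (the Gibbs
inequalities for one-letter cylinders already bound `φ`). For `q = n(h + t)` and `h ≥ -B` this
gives `e^{-R C⁻⁴ e^{-nB}}`, and `R e^{-nB} ≳ e^{n(t - 2B)} / n ≥ n t² / 8` once `t ≥ 4B`.
-/

namespace GibbsEntropy

variable {A : Type*}

theorem shift_iterate_apply (k : ℕ) (x : ℕ → A) (i : ℕ) : shift^[k] x i = x (i + k) := by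
  induction k generalizing x with
  | zero => rfl
  | succ k ih => rw [Function.iterate_succ_apply, ih]; rfl

theorem measurable_shift [MeasurableSpace A] : Measurable (shift (A := A)) :=
  measurable_pi_lambda _ fun i => measurable_pi_apply (i + 1)

def prefixWord (k : ℕ) (x : ℕ → A) : Fin k → A := fun i => x i

theorem cylinder_eq_preimage_prefixWord {k : ℕ} (w : Fin k → A) :
    cylinder w = prefixWord k ⁻¹' {w} := by
  ext x
  simp [cylinder, prefixWord, funext_iff]

theorem measurableSet_cylinder [MeasurableSpace A] [MeasurableSingletonClass A] {k : ℕ}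
    (w : Fin k → A) : MeasurableSet (cylinder w) := by
  rw [cylinder_eq_preimage_prefixWord]
  exact measurable_pi_lambda _ (fun i => measurable_pi_apply _) (measurableSet_singleton w)

theorem exists_prefixWord_eq {k : ℕ} (hk : 1 ≤ k) (w : Fin k → A) :
    ∃ x : ℕ → A, prefixWord k x = w :=
  ⟨fun i => if h : i < k then w ⟨i, h⟩ else w ⟨0, hk⟩, funext fun i => by simp [prefixWord]⟩

theorem exists_prefixWord_eq_and_prefixWord_shift_eq {m n : ℕ} (hn : 1 ≤ n) (u : Fin m → A)
    (w : Fin n → A) : ∃ x : ℕ → A, prefixWord m x = u ∧ prefixWord n (shift^[m] x) = w := by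
  obtain ⟨y, rfl⟩ := exists_prefixWord_eq hn w
  refine ⟨fun i => if h : i < m then u ⟨i, h⟩ else y (i - m), funext fun i => ?_,
    funext fun i => ?_⟩
  · simp [prefixWord]
  · simp [prefixWord, shift_iterate_apply]

theorem cylinder_prefixWord_add (m n : ℕ) (x : ℕ → A) :
    cylinder (prefixWord (m + n) x) =
      cylinder (prefixWord m x) ∩ shift^[m] ⁻¹' cylinder (prefixWord n (shift^[m] x)) := by
  ext y
  simp only [cylinder, prefixWord, Set.mem_ofPred_eq, Set.mem_inter_iff, Set.mem_preimage,
    shift_iterate_apply, Fin.forall_iff]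
  constructor
  · intro h
    exact ⟨fun i hi => h i (by omega), fun i hi => h (i + m) (by omega)⟩
  · rintro ⟨hl, hr⟩ i hi
    rcases lt_or_ge i m with him | him
    · exact hl i him
    · simpa [Nat.sub_add_cancel him] using hr (i - m) (by omega)

def blockAvoid (n : ℕ) (w : Fin n → A) (r : ℕ) : Set (ℕ → A) :=
  ⋂ i ∈ Finset.range r, (shift^[(i + 1) * n] ⁻¹' cylinder w)ᶜ

theorem blockAvoid_zero (n : ℕ) (w : Fin n → A) : blockAvoid n w 0 = Set.univ := by
  simp [blockAvoid]

theorem blockAvoid_succ (n : ℕ) (w : Fin n → A) (r : ℕ) :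
    blockAvoid n w (r + 1) = blockAvoid n w r ∩ (shift^[(r + 1) * n] ⁻¹' cylinder w)ᶜ := by
  rw [blockAvoid, Finset.range_add_one, Finset.set_biInter_insert, Set.inter_comm, blockAvoid]

theorem measurableSet_blockAvoid [MeasurableSpace A] [MeasurableSingletonClass A] (n : ℕ)
    (w : Fin n → A) (r : ℕ) : MeasurableSet (blockAvoid n w r) :=
  Finset.measurableSet_biInter _ fun _ _ =>
    ((measurableSet_cylinder w).preimage (measurable_shift.iterate _)).compl

theorem mem_blockAvoid_of_agree {n : ℕ} {w : Fin n → A} {r : ℕ} {x y : ℕ → A}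
    (hxy : ∀ i < (r + 1) * n, x i = y i) (hx : x ∈ blockAvoid n w r) : y ∈ blockAvoid n w r := by
  simp only [blockAvoid, Set.mem_iInter, Set.mem_compl_iff, Set.mem_preimage, cylinder,
    Set.mem_ofPred_eq, shift_iterate_apply, Finset.mem_range, not_forall] at hx ⊢
  intro i hi
  obtain ⟨l, hl⟩ := hx i hi
  refine ⟨l, ?_⟩
  rwa [← hxy]
  have : (i + 1) * n + n ≤ (r + 1) * n := by nlinarith
  omega

section Measure

variable [Fintype A] [MeasurableSpace A] [MeasurableSingletonClass A] (μ : Measure (ℕ → A))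

theorem measure_eq_sum_inter_cylinder {s : Set (ℕ → A)} (hs : MeasurableSet s) (k : ℕ) :
    μ s = ∑ u : Fin k → A, μ (s ∩ cylinder u) := by
  have hunion : s = ⋃ u : Fin k → A, s ∩ cylinder u := by
    ext x
    simp [cylinder_eq_preimage_prefixWord]
  conv_lhs => rw [hunion]
  rw [measure_iUnion _ fun u => hs.inter (measurableSet_cylinder u), tsum_fintype]
  intro u v huv
  simp only [Function.onFun, cylinder_eq_preimage_prefixWord]
  exact (Disjoint.preimage _ (Set.disjoint_singleton.mpr huv)).mono Set.inter_subset_right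
    Set.inter_subset_right

theorem sum_measure_cylinder [IsProbabilityMeasure μ] (k : ℕ) :
    ∑ w : Fin k → A, μ (cylinder w) = 1 := by
  simpa using (measure_eq_sum_inter_cylinder μ MeasurableSet.univ k).symm

theorem mul_measureReal_le_measureReal_inter [IsFiniteMeasure μ] {m : ℕ} {D S : Set (ℕ → A)}
    (hDm : MeasurableSet D) (hD : ∀ x y : ℕ → A, (∀ i < m, x i = y i) → x ∈ D → y ∈ D)
    (hS : MeasurableSet S) {c : ℝ}
    (hcyl : ∀ u : Fin m → A, μ.real (cylinder u) * c ≤ μ.real (cylinder u ∩ S)) :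
    μ.real D * c ≤ μ.real (D ∩ S) := by
  simp only [measureReal_def, measure_eq_sum_inter_cylinder μ hDm m,
    measure_eq_sum_inter_cylinder μ (hDm.inter hS) m]
  rw [ENNReal.toReal_sum fun _ _ => measure_ne_top μ _,
    ENNReal.toReal_sum fun _ _ => measure_ne_top μ _, Finset.sum_mul]
  refine Finset.sum_le_sum fun u _ => ?_
  -- an `m`-cylinder meeting `D` lies inside `D`
  by_cases hne : (D ∩ cylinder u).Nonempty
  · obtain ⟨x, hxD, hxu⟩ := hne
    have hsub : cylinder u ⊆ D := fun y hyu =>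
      hD x y (fun i hi => (hxu ⟨i, hi⟩).trans (hyu ⟨i, hi⟩).symm) hxD
    rw [Set.inter_eq_right.mpr hsub, Set.inter_right_comm, Set.inter_eq_right.mpr hsub]
    exact hcyl u
  · rw [Set.not_nonempty_iff_eq_empty.mp hne]
    simp

theorem measure_prod_iUnion_cylinder_prod_le [IsProbabilityMeasure μ] (ν : Measure (ℕ → A))
    [SFinite ν] {n : ℕ} (S : (Fin n → A) → Set (ℕ → A)) {δ : ℝ≥0∞} (hS : ∀ w, ν (S w) ≤ δ) :
    (μ.prod ν) (⋃ w, cylinder w ×ˢ S w) ≤ δ :=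
  calc (μ.prod ν) (⋃ w, cylinder w ×ˢ S w)
      ≤ ∑ w, μ (cylinder w) * ν (S w) := by
        simpa only [Measure.prod_prod] using
          measure_iUnion_fintype_le (μ.prod ν) fun w : Fin n → A => cylinder w ×ˢ S w
    _ ≤ ∑ w, μ (cylinder w) * δ := by gcongr with w; exact hS w
    _ = δ := by rw [← Finset.sum_mul, sum_measure_cylinder, one_mul]

theorem measureReal_blockAvoid_le_of_mul_le [IsProbabilityMeasure μ] {n : ℕ} (hn : 1 ≤ n)
    (w : Fin n → A) {κ : ℝ} (hκ : κ ≤ 1) (hindep : ∀ m, 1 ≤ m → ∀ u : Fin m → A,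
      μ.real (cylinder u) * (κ * μ.real (cylinder w)) ≤
        μ.real (cylinder u ∩ shift^[m] ⁻¹' cylinder w)) (r : ℕ) :
    μ.real (blockAvoid n w r) ≤ (1 - κ * μ.real (cylinder w)) ^ r := by
  induction r with
  | zero => simp [blockAvoid_zero]
  | succ r ih =>
    set S := shift^[(r + 1) * n] ⁻¹' cylinder w
    have hS : MeasurableSet S := (measurableSet_cylinder w).preimage (measurable_shift.iterate _)
    have hhit : μ.real (blockAvoid n w r) * (κ * μ.real (cylinder w)) ≤
        μ.real (blockAvoid n w r ∩ S) :=
      mul_measureReal_le_measureReal_inter μ (measurableSet_blockAvoid n w r)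
        (fun x y hxy => mem_blockAvoid_of_agree hxy) hS (hindep _ (by nlinarith))
    have hsplit : μ.real (blockAvoid n w (r + 1)) =
        μ.real (blockAvoid n w r) - μ.real (blockAvoid n w r ∩ S) := by
      rw [blockAvoid_succ, ← Set.sdiff_eq,
        ← measureReal_inter_add_sdiff (s := blockAvoid n w r) hS]
      ring
    have hnonneg : 0 ≤ 1 - κ * μ.real (cylinder w) := by
      nlinarith [measureReal_nonneg (μ := μ) (s := cylinder w),
        measureReal_le_one (μ := μ) (s := cylinder w)]
    calc μ.real (blockAvoid n w (r + 1))
        ≤ (1 - κ * μ.real (cylinder w)) * μ.real (blockAvoid n w r) := by rw [hsplit]; linarith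
      _ ≤ (1 - κ * μ.real (cylinder w)) * (1 - κ * μ.real (cylinder w)) ^ r := by gcongr
      _ = (1 - κ * μ.real (cylinder w)) ^ (r + 1) := by ring

end Measure

section Gibbs

variable [MeasurableSpace A]

def IsGibbsWith (φ : (ℕ → A) → ℝ) (μ : Measure (ℕ → A)) (C : ℝ) : Prop :=
  1 < C ∧ ∀ (x : ℕ → A) (m : ℕ), 1 ≤ m →
    C⁻¹ * Real.exp (birkhoffSum shift φ m x) ≤ μ.real (cylinder (prefixWord m x)) ∧
    μ.real (cylinder (prefixWord m x)) ≤ C * Real.exp (birkhoffSum shift φ m x)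

theorem isGibbs_iff {φ : (ℕ → A) → ℝ} {μ : Measure (ℕ → A)} :
    IsGibbs φ μ ↔ ∃ C, IsGibbsWith φ μ C := Iff.rfl

namespace IsGibbsWith

variable {φ : (ℕ → A) → ℝ} {μ : Measure (ℕ → A)} {C : ℝ}

theorem exists_abs_le [Finite A] [Nonempty A] [IsProbabilityMeasure μ] (hG : IsGibbsWith φ μ C) :
    ∃ B, 0 ≤ B ∧ ∀ x, |φ x| ≤ B := by
  have hC0 : 0 < C := one_pos.trans hG.1
  have hgibbs₁ (x : ℕ → A) := hG.2 x 1 le_rfl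
  simp only [birkhoffSum, Finset.sum_range_one, Function.iterate_zero_apply] at hgibbs₁
  obtain ⟨a₀, ha₀⟩ := Finite.exists_min fun a : A => μ.real (cylinder fun _ : Fin 1 => a)
  set p := μ.real (cylinder fun _ : Fin 1 => a₀)
  have hp : 0 < p := lt_of_lt_of_le (by positivity) (hgibbs₁ fun _ => a₀).1
  have hp1 : p ≤ 1 := measureReal_le_one
  refine ⟨Real.log C - Real.log p, by linarith [Real.log_pos hG.1, Real.log_nonpos hp.le hp1],
    fun x => abs_le.mpr ⟨?_, ?_⟩⟩
  · have hword : prefixWord 1 x = fun _ => x 0 := funext fun i => by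
      simp [prefixWord, Fin.fin_one_eq_zero i]
    have hpx : p ≤ C * Real.exp (φ x) := by
      have := (hgibbs₁ x).2
      rw [hword] at this
      exact (ha₀ (x 0)).trans this
    have := Real.log_le_log hp hpx
    rw [Real.log_mul hC0.ne' (Real.exp_pos _).ne', Real.log_exp] at this
    linarith
  · have hexp : Real.exp (φ x) ≤ C := by
      have := (hgibbs₁ x).1.trans measureReal_le_one
      rwa [inv_mul_le_iff₀ hC0, mul_one] at this
    linarith [(Real.le_log_iff_exp_le hC0).mpr hexp, Real.log_nonpos hp.le hp1]

theorem le_measureReal_cylinder {B : ℝ} (hG : IsGibbsWith φ μ C) (hB : ∀ x, -B ≤ φ x) {n : ℕ}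
    (hn : 1 ≤ n) (w : Fin n → A) : C⁻¹ * Real.exp (-(n * B)) ≤ μ.real (cylinder w) := by
  obtain ⟨x, rfl⟩ := exists_prefixWord_eq hn w
  refine le_trans (mul_le_mul_of_nonneg_left (Real.exp_le_exp.mpr ?_)
    (inv_nonneg.mpr (one_pos.trans hG.1).le)) (hG.2 x n hn).1
  calc -(n * B) = ∑ _ ∈ Finset.range n, -B := by simp
    _ ≤ birkhoffSum shift φ n x := Finset.sum_le_sum fun i _ => hB _

/-- Quasi-Bernoulli property of Gibbs measures. -/
theorem mul_le_measureReal_cylinder_prefixWord_add (hG : IsGibbsWith φ μ C)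
    (x : ℕ → A) {m n : ℕ} (hm : 1 ≤ m) (hn : 1 ≤ n) :
    C⁻¹ ^ 3 * μ.real (cylinder (prefixWord m x)) * μ.real (cylinder (prefixWord n (shift^[m] x)))
      ≤ μ.real (cylinder (prefixWord (m + n) x)) := by
  have hC0 : 0 < C := one_pos.trans hG.1
  have hconcat := (hG.2 x (m + n) (by omega)).1
  rw [birkhoffSum_add, Real.exp_add] at hconcat
  calc C⁻¹ ^ 3 * μ.real (cylinder (prefixWord m x)) *
        μ.real (cylinder (prefixWord n (shift^[m] x)))
      ≤ C⁻¹ ^ 3 * (C * Real.exp (birkhoffSum shift φ m x)) *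
          (C * Real.exp (birkhoffSum shift φ n (shift^[m] x))) := by
        gcongr
        exacts [(hG.2 x m hm).2, (hG.2 _ n hn).2]
    _ = C⁻¹ * (Real.exp (birkhoffSum shift φ m x) *
          Real.exp (birkhoffSum shift φ n (shift^[m] x))) := by
        field_simp
    _ ≤ _ := hconcat

theorem measureReal_cylinder_mul_le_measureReal_inter (hG : IsGibbsWith φ μ C)
    {m n : ℕ} (hm : 1 ≤ m) (hn : 1 ≤ n) (u : Fin m → A) (w : Fin n → A) :
    μ.real (cylinder u) * (C⁻¹ ^ 3 * μ.real (cylinder w)) ≤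
      μ.real (cylinder u ∩ shift^[m] ⁻¹' cylinder w) := by
  obtain ⟨x, rfl, rfl⟩ := exists_prefixWord_eq_and_prefixWord_shift_eq hn u w
  rw [← cylinder_prefixWord_add]
  linarith [hG.mul_le_measureReal_cylinder_prefixWord_add x hm hn]

theorem measureReal_blockAvoid_le [Fintype A] [MeasurableSingletonClass A]
    [IsProbabilityMeasure μ] {B : ℝ} (hG : IsGibbsWith φ μ C)
    (hB : ∀ x, -B ≤ φ x) {n : ℕ} (hn : 1 ≤ n) (w : Fin n → A) (r : ℕ) :
    μ.real (blockAvoid n w r) ≤ (1 - C⁻¹ ^ 4 * Real.exp (-(n * B))) ^ r := by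
  have hCinv0 : 0 < C⁻¹ := inv_pos.mpr (one_pos.trans hG.1)
  have hCinv : C⁻¹ ^ 3 ≤ 1 := pow_le_one₀ hCinv0.le (inv_le_one_of_one_le₀ hG.1.le)
  refine (measureReal_blockAvoid_le_of_mul_le μ hn w hCinv
    (fun m hm u => hG.measureReal_cylinder_mul_le_measureReal_inter hm hn u w) r).trans ?_
  have hw := hG.le_measureReal_cylinder hB hn w
  have hw1 : μ.real (cylinder w) ≤ 1 := measureReal_le_one
  gcongr ?_ ^ r
  · nlinarith [pow_pos hCinv0 3]
  · nlinarith [pow_pos hCinv0 3]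

end IsGibbsWith

end Gibbs

theorem log_hitTime_le {n j : ℕ} {x y : ℕ → A} {q : ℝ} (hj : 1 ≤ j)
    (hocc : shift^[j] y ∈ cylinder (prefixWord n x)) (hjq : (j : ℝ) ≤ Real.exp q) :
    ENNReal.log (hitTime n x y) ≤ q := by
  have hW : hitTime n x y ≤ j :=
    iInf₂_le j ⟨hj, fun i => by simpa [shift_iterate_apply, add_comm, prefixWord] using hocc i⟩
  calc ENNReal.log (hitTime n x y) ≤ ENNReal.log (ENNReal.ofReal (Real.exp q)) :=
        ENNReal.log_monotone (hW.trans (by rw [← ENNReal.ofReal_natCast]; gcongr))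
    _ = q := by rw [ENNReal.log_ofReal_of_pos (Real.exp_pos q), Real.log_exp]

/-- A hitting time beyond `e^q` forces the first `n`-word of `x` to be absent from all the
`⌊e^q / n⌋` disjoint `n`-blocks of `y` after the first. -/
theorem setOf_lt_log_hitTime_subset {n : ℕ} (hn : 1 ≤ n) (q : ℝ) :
    {p : (ℕ → A) × (ℕ → A) | (q : EReal) < ENNReal.log (hitTime n p.1 p.2)} ⊆
      ⋃ w : Fin n → A, cylinder w ×ˢ blockAvoid n w ⌊Real.exp q / n⌋₊ := by
  rintro ⟨x, y⟩ hlt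
  refine Set.mem_iUnion.mpr ⟨prefixWord n x, fun i => rfl, ?_⟩
  simp only [blockAvoid, Set.mem_iInter, Set.mem_compl_iff, Set.mem_preimage, Finset.mem_range]
  intro i hi hocc
  refine (log_hitTime_le (by nlinarith) hocc ?_).not_gt hlt
  have hn0 : (0 : ℝ) < n := by exact_mod_cast hn
  have hi' : ((i + 1 : ℕ) : ℝ) ≤ Real.exp q / n :=
    (Nat.le_floor_iff (by positivity)).mp (Nat.succ_le_of_lt hi)
  push_cast at hi' ⊢
  exact (le_div_iff₀ hn0).mp hi'

theorem one_sub_pow_floor_le {δ B h t : ℝ} {n : ℕ} (hδ0 : 0 ≤ δ) (hδ1 : δ ≤ 1) (hB : 0 ≤ B)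
    (hh : -B ≤ h) (hn : 1 ≤ n) (ht : 4 * B ≤ t) :
    (1 - δ * Real.exp (-(n * B))) ^ ⌊Real.exp (n * (h + t)) / n⌋₊ ≤
      Real.exp 1 * Real.exp (-(δ / 8) * n * t ^ 2) := by
  set N : ℝ := (n : ℝ)
  have hN : 1 ≤ N := Nat.one_le_cast.mpr hn
  set ε := δ * Real.exp (-(N * B)) with hε
  set R := ⌊Real.exp (N * (h + t)) / N⌋₊
  have hε1 : ε ≤ 1 := mul_le_one₀ hδ1 (by positivity) (Real.exp_le_one_iff.mpr (by nlinarith))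
  have hR : Real.exp (N * (h + t)) / N - 1 ≤ R := (Nat.sub_one_lt_floor _).le
  -- `e^x ≥ x² / 2` turns the exponentially many blocks into the Gaussian rate
  have hgrowth : N * t ^ 2 / 8 ≤ Real.exp (-(N * B)) * Real.exp (N * (h + t)) / N := by
    have hsq := Real.pow_div_factorial_le_exp _ (by nlinarith : 0 ≤ N * (t - 2 * B)) 2
    have hmono : Real.exp (N * (t - 2 * B)) ≤ Real.exp (-(N * B)) * Real.exp (N * (h + t)) := by
      rw [← Real.exp_add]; gcongr; nlinarith
    have ht2 : t ^ 2 / 4 ≤ (t - 2 * B) ^ 2 := by nlinarith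
    rw [le_div_iff₀ (by positivity)]
    calc N * t ^ 2 / 8 * N = N ^ 2 * (t ^ 2 / 4) / 2 := by ring
      _ ≤ N ^ 2 * (t - 2 * B) ^ 2 / 2 := by gcongr
      _ = (N * (t - 2 * B)) ^ 2 / (Nat.factorial 2) := by norm_num; ring
      _ ≤ _ := hsq.trans hmono
  have hεR : δ * (N * t ^ 2 / 8) - 1 ≤ ε * R := by
    have hmain : δ * (N * t ^ 2 / 8) ≤ ε * (Real.exp (N * (h + t)) / N) :=
      calc δ * (N * t ^ 2 / 8)
          ≤ δ * (Real.exp (-(N * B)) * Real.exp (N * (h + t)) / N) := by gcongr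
        _ = ε * (Real.exp (N * (h + t)) / N) := by rw [hε]; ring
    nlinarith [mul_le_mul_of_nonneg_left hR (by positivity : 0 ≤ ε)]
  calc (1 - ε) ^ R ≤ Real.exp (-ε) ^ R :=
        pow_le_pow_left₀ (by linarith) (Real.one_sub_le_exp_neg ε) R
    _ = Real.exp (-(ε * R)) := by rw [← Real.exp_nat_mul]; ring_nf
    _ ≤ Real.exp (1 + -(δ / 8) * N * t ^ 2) := by gcongr; linarith
    _ = Real.exp 1 * Real.exp (-(δ / 8) * N * t ^ 2) := Real.exp_add _ _

end GibbsEntropy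

theorem statement_13_general {A : Type*} [Fintype A] [MeasurableSpace A] [MeasurableSingletonClass A]
    (φ : (ℕ → A) → ℝ)
    (μ : Measure (ℕ → A)) [IsProbabilityMeasure μ]
    (hGibbs : IsGibbs φ μ) :
    ∃ C₁ C₂ t₀ : ℝ, 0 < C₁ ∧ 0 < C₂ ∧ 0 < t₀ ∧ ∀ n : ℕ, 1 ≤ n → ∀ t : ℝ, t₀ < t →
      (μ.prod μ) {p : (ℕ → A) × (ℕ → A) |
          (((n : ℝ) * ((-∫ y, φ y ∂μ) + t) : ℝ) : EReal) < ENNReal.log (hitTime n p.1 p.2)} ≤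
        ENNReal.ofReal (C₁ * Real.exp (-C₂ * n * t ^ 2)) := by
  obtain ⟨C, hG⟩ := isGibbs_iff.mp hGibbs
  have : Nonempty A := ⟨(nonempty_of_isProbabilityMeasure μ).some 0⟩
  obtain ⟨B, hB0, hφB⟩ := hG.exists_abs_le
  have hent : -B ≤ -∫ y, φ y ∂μ := by
    have := norm_integral_le_of_norm_le_const (μ := μ) (f := φ)
      (Filter.Eventually.of_forall fun x => (Real.norm_eq_abs _).trans_le (hφB x))
    rw [probReal_univ, mul_one, Real.norm_eq_abs] at this
    linarith [(abs_le.mp this).2]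
  have hCinv : 0 < C⁻¹ := inv_pos.mpr (one_pos.trans hG.1)
  refine ⟨Real.exp 1, C⁻¹ ^ 4 / 8, 4 * B + 1, Real.exp_pos 1, by positivity, by linarith,
    fun n hn t ht => ?_⟩
  calc _ ≤ μ.prod μ (⋃ w : Fin n → A, cylinder w ×ˢ
          blockAvoid n w ⌊Real.exp (n * ((-∫ y, φ y ∂μ) + t)) / n⌋₊) :=
        measure_mono (setOf_lt_log_hitTime_subset hn _)
    _ ≤ ENNReal.ofReal ((1 - C⁻¹ ^ 4 * Real.exp (-(n * B))) ^
          ⌊Real.exp (n * ((-∫ y, φ y ∂μ) + t)) / n⌋₊) :=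
        measure_prod_iUnion_cylinder_prod_le μ μ _ fun w => by
          rw [← ofReal_measureReal]
          exact ENNReal.ofReal_le_ofReal
            (hG.measureReal_blockAvoid_le (fun x => (abs_le.mp (hφB x)).1) hn w _)
    _ ≤ _ := ENNReal.ofReal_le_ofReal <| one_sub_pow_floor_le (by positivity)
        (pow_le_one₀ hCinv.le (inv_le_one_of_one_le₀ hG.1.le)) hB0 hent hn (by linarith)

theorem statement_13 {A : Type*} [Fintype A] [DecidableEq A] [MeasurableSpace A] [MeasurableSingletonClass A]
    (hA : 2 ≤ Fintype.card A)
    (θ : ℝ) (hθ : θ ∈ Set.Ioo (0 : ℝ) 1)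
    (φ : (ℕ → A) → ℝ) (hφ : LipFun θ φ)
    (μ : Measure (ℕ → A)) [IsProbabilityMeasure μ]
    (hσ : MeasurePreserving (shift (A := A)) μ μ)
    (hGibbs : IsGibbs φ μ) :
    ∃ C₁ C₂ t₀ : ℝ, 0 < C₁ ∧ 0 < C₂ ∧ 0 < t₀ ∧ ∀ n : ℕ, 1 ≤ n → ∀ t : ℝ, t₀ < t →
      (μ.prod μ) {p : (ℕ → A) × (ℕ → A) |
          (((n : ℝ) * ((-∫ y, φ y ∂μ) + t) : ℝ) : EReal) < ENNReal.log (hitTime n p.1 p.2)} ≤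
        ENNReal.ofReal (C₁ * Real.exp (-C₂ * n * t ^ 2)) :=
  statement_13_general φ μ hGibbs
end
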